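/- Consider the two-sorted term language defined mutually by: sequence terms S ::= a variable (from a type V) | ε | unit(e) | update(S, N, e) | con(S₁, …, Sₙ) with n ≥ 0 (elements e from a type E, and N an integer term), and integer terms N ::= an integer literal | len(S) | N + N | −N. Define the one-step rewrite relation generated, closed under arbitrary subterm contexts, by the rules: len(ε) → 0; len(unit(e)) → 1; len(update(s, i, e)) → len(s); len(con(s₁, …, sₙ)) → len(s₁) + … + len(sₙ); con(u₁,…, ε, …, uₘ) → the same concatenation with that ε removed; and con(u₁, …, con(s₁, …, sₙ), …, uₘ) → the flattened concatenation con(u₁, …, s₁, …, sₙ, …, uₘ). Then this one-step rewrite relation is well-founded, i.e., there is no infinite rewrite sequence. -/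

import Mathlib

mutual
  /-- Sequence terms: variables, the empty sequence, unit, update, and
  variadic concatenation (with `n ≥ 0` arguments). -/
  inductive SeqTerm (V E : Type) : Type where
    | var : V → SeqTerm V E
    | empty : SeqTerm V E
    | unit : E → SeqTerm V E
    | update : SeqTerm V E → IntTerm V E → E → SeqTerm V E
    | con : List (SeqTerm V E) → SeqTerm V E

  /-- Integer terms: integer literals, length of a sequence term, addition, negation. -/
  inductive IntTerm (V E : Type) : Type where
    | lit : ℤ → IntTerm V E
    | len : SeqTerm V E → IntTerm V E
    | add : IntTerm V E → IntTerm V E → IntTerm V E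
    | neg : IntTerm V E → IntTerm V E
end

/-- The sum `len s₁ + … + len sₙ` of the lengths of a list of sequence terms. -/
def sumLens {V E : Type} : List (SeqTerm V E) → IntTerm V E
  | [] => .lit 0
  | [s] => .len s
  | s :: rest => .add (.len s) (sumLens rest)

mutual
  /-- One-step rewriting on sequence terms: removing an empty component of a
  concatenation, flattening a nested concatenation, and closure under all
  sequence-term contexts. -/
  inductive SeqStep {V E : Type} : SeqTerm V E → SeqTerm V E → Prop where
    | conEmpty (a b : List (SeqTerm V E)) :
        SeqStep (.con (a ++ .empty :: b)) (.con (a ++ b))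
    | conFlatten (a : List (SeqTerm V E)) (L : List (SeqTerm V E))
        (b : List (SeqTerm V E)) :
        SeqStep (.con (a ++ .con L :: b)) (.con (a ++ (L ++ b)))
    | updateSeq {s s' : SeqTerm V E} (i : IntTerm V E) (e : E) :
        SeqStep s s' → SeqStep (.update s i e) (.update s' i e)
    | updateInt {i i' : IntTerm V E} (s : SeqTerm V E) (e : E) :
        IntStep i i' → SeqStep (.update s i e) (.update s i' e)
    | conArg {s s' : SeqTerm V E} (a b : List (SeqTerm V E)) :
        SeqStep s s' → SeqStep (.con (a ++ s :: b)) (.con (a ++ s' :: b))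

  /-- One-step rewriting on integer terms: the four `len` rules and closure
  under all integer-term contexts. -/
  inductive IntStep {V E : Type} : IntTerm V E → IntTerm V E → Prop where
    | lenEmpty : IntStep (.len (.empty : SeqTerm V E)) (.lit 0)
    | lenUnit (e : E) : IntStep (.len (.unit e : SeqTerm V E)) (.lit 1)
    | lenUpdate (s : SeqTerm V E) (i : IntTerm V E) (e : E) :
        IntStep (.len (.update s i e)) (.len s)
    | lenCon (L : List (SeqTerm V E)) : IntStep (.len (.con L)) (sumLens L)
    | lenArg {s s' : SeqTerm V E} : SeqStep s s' → IntStep (.len s) (.len s')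
    | addL {i i' : IntTerm V E} (j : IntTerm V E) :
        IntStep i i' → IntStep (.add i j) (.add i' j)
    | addR {j j' : IntTerm V E} (i : IntTerm V E) :
        IntStep j j' → IntStep (.add i j) (.add i j')
    | negArg {i i' : IntTerm V E} : IntStep i i' → IntStep (.neg i) (.neg i')
end

/-!
Give every term a natural-number weight in which each constructor is strictly monotone in its
arguments; then it suffices that each rule strictly decreases the weight. Doubling the weight of
the arguments of `con` makes flattening decrease it, and also pays for the `n - 1` additions in
the `len s₁ + … + len sₙ` produced from `len (con s₁ … sₙ)`, since every sequence term weighs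
at least `1`.
-/

namespace SeqTerm

variable {V E : Type}

mutual
  def weight : SeqTerm V E → ℕ
    | .var _ => 1
    | .empty => 1
    | .unit _ => 1
    | .update s i _ => s.weight + i.weight + 1
    | .con L => 2 * listWeight L + 1

  def listWeight : List (SeqTerm V E) → ℕ
    | [] => 0
    | s :: rest => s.weight + listWeight rest

  def _root_.IntTerm.weight : IntTerm V E → ℕ
    | .lit _ => 0
    | .len s => s.weight
    | .add i j => i.weight + j.weight + 1
    | .neg i => i.weight + 1
end

theorem one_le_weight (s : SeqTerm V E) : 1 ≤ s.weight := by
  cases s <;> simp [weight]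

@[simp]
theorem listWeight_nil : listWeight ([] : List (SeqTerm V E)) = 0 := by
  simp [listWeight]

@[simp]
theorem listWeight_cons (s : SeqTerm V E) (L : List (SeqTerm V E)) :
    listWeight (s :: L) = s.weight + listWeight L := by
  simp [listWeight]

@[simp]
theorem listWeight_append (a b : List (SeqTerm V E)) :
    listWeight (a ++ b) = listWeight a + listWeight b := by
  induction a with
  | nil => simp
  | cons s rest ih => simp [ih]; omega

end SeqTerm

open SeqTerm

theorem IntTerm.weight_sumLens_lt {V E : Type} (L : List (SeqTerm V E)) :
    (sumLens L).weight < 2 * listWeight L + 1 := by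
  induction L with
  | nil => simp [sumLens, IntTerm.weight]
  | cons s rest ih =>
    cases rest with
    | nil => simp [sumLens, IntTerm.weight]; omega
    | cons t r =>
      simp only [sumLens, IntTerm.weight, listWeight_cons] at ih ⊢
      have := one_le_weight s
      omega

mutual
  theorem SeqStep.weight_lt {V E : Type} {s t : SeqTerm V E} :
      SeqStep s t → t.weight < s.weight
    | .conEmpty a b => by simp [weight]
    | .conFlatten a L b => by simp [weight]; omega
    | .updateSeq i e h => by simp [weight, h.weight_lt]
    | .updateInt s e h => by simp [weight, h.weight_lt]
    | .conArg a b h => by simp [weight, h.weight_lt]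

  theorem IntStep.weight_lt {V E : Type} {i j : IntTerm V E} :
      IntStep i j → j.weight < i.weight
    | .lenEmpty => by simp [IntTerm.weight, weight]
    | .lenUnit e => by simp [IntTerm.weight, weight]
    | .lenUpdate s i e => by simp [IntTerm.weight, weight]
    | .lenCon L => IntTerm.weight_sumLens_lt L
    | .lenArg h => h.weight_lt
    | .addL j h => by simp [IntTerm.weight, h.weight_lt]
    | .addR i h => by simp [IntTerm.weight, h.weight_lt]
    | .negArg h => by simp [IntTerm.weight, h.weight_lt]
end

/-- The one-step rewrite relation is terminating: there is no infinite rewrite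
sequence of sequence terms nor of integer terms. -/
theorem stmt_14 {V E : Type} :
    (¬ ∃ f : ℕ → SeqTerm V E, ∀ n, SeqStep (f n) (f (n + 1))) ∧
    (¬ ∃ g : ℕ → IntTerm V E, ∀ n, IntStep (g n) (g (n + 1))) := by
  constructor
  · rintro ⟨f, hf⟩
    exact not_strictAnti_of_wellFoundedLT (weight ∘ f)
      (strictAnti_nat_of_succ_lt fun n => (hf n).weight_lt)
  · rintro ⟨g, hg⟩
    exact not_strictAnti_of_wellFoundedLT (IntTerm.weight ∘ g)
      (strictAnti_nat_of_succ_lt fun n => (hg n).weight_lt)
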